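/- arXiv:1107.4636 — 4 statements merged into one kernel-verified Lean document; each statement's English description precedes it below -/
import Mathlib

section
/- For every positive integer m, the real Lie algebra 𝔤 = ℝ^m ⊕ ℂ^{m+1} with basis {z_k}_{1≤k≤m} ∪ {e_i, f_i}_{1≤i≤m+1} (f_i = √−1 e_i) and nonzero brackets [e_i, f_j] = z_{i+j−1}, [z_k, e_i] = f_{i+k}, [z_k, f_j] = −e_{k+j} (with z_ℓ = e_q = f_q = 0 for ℓ > m, q > m+1) is a Lie algebra, i.e., the bracket is antisymmetric and satisfies the Jacobi identity. -/
open scoped BigOperators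

/-- The underlying vector space `ℝ^m ⊕ ℂ^{m+1}` of the Kath–Olbrich Lie algebra.
The real basis is `{z_k} ∪ {e_i} ∪ {f_i}` where `z_k` (for `1 ≤ k ≤ m`, stored with
0-based index `k-1`) spans the `k`-th `ℝ`-coordinate, and `e_i`, `f_i = √-1 e_i`
(for `1 ≤ i ≤ m+1`, stored with 0-based index `i-1`) span the `i`-th `ℂ`-coordinate. -/
def KO (m : ℕ) : Type :=
  (Fin m → ℝ) × (Fin (m + 1) → ℂ)

noncomputable instance (m : ℕ) : AddCommGroup (KO m) := by unfold KO; infer_instance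
noncomputable instance (m : ℕ) : Module ℝ (KO m) := by unfold KO; infer_instance

/-- The basis vector `z_k` (0-based index). -/
noncomputable def koZ {m : ℕ} (k : Fin m) : KO m := (Pi.single k 1, 0)

/-- The basis vector `e_i` (0-based index). -/
noncomputable def koE {m : ℕ} (i : Fin (m + 1)) : KO m := (0, Pi.single i 1)

/-- The basis vector `f_i = √-1 e_i` (0-based index). -/
noncomputable def koF {m : ℕ} (i : Fin (m + 1)) : KO m := (0, Pi.single i Complex.I)

/-- The Kath–Olbrich bracket on `ℝ^m ⊕ ℂ^{m+1}`, extended bilinearly from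
`[e_i, f_j] = z_{i+j-1}`, `[z_k, e_i] = f_{i+k}`, `[z_k, f_j] = -e_{k+j}` (with
out-of-range indices giving `0`).  In closed form (0-based indices): the `ℝ^m`-component
of `[(z,w),(z',w')]` at index `κ` is `∑_{a+b=κ} Im(conj(w_a) w'_b)`, and the
`ℂ^{m+1}`-component at index `b` is `√-1 (∑_{κ+a+1=b} (z_κ w'_a − z'_κ w_a))`. -/
noncomputable def koBracket {m : ℕ} (x y : KO m) : KO m :=
  (fun k => ∑ a : Fin (m + 1), ∑ b : Fin (m + 1),
      if (a : ℕ) + (b : ℕ) = (k : ℕ) then ((starRingEnd ℂ) (x.2 a) * y.2 b).im else 0,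
   fun b => Complex.I *
      ((∑ κ : Fin m, ∑ a : Fin (m + 1),
          if (κ : ℕ) + (a : ℕ) + 1 = (b : ℕ) then (x.1 κ : ℂ) * y.2 a else 0) -
       (∑ κ : Fin m, ∑ a : Fin (m + 1),
          if (κ : ℕ) + (a : ℕ) + 1 = (b : ℕ) then (y.1 κ : ℂ) * x.2 a else 0)))

/-!
Encode `x = (z, w)` by the three real polynomials `∑ Re w_a X^a`, `∑ Im w_a X^a` and
`∑ z_k X^(k+1)`, read modulo `X^(m+1)`. The structure constants only add degrees, `[e, f]` raising
them by one more, so this encoding is an injective linear map carrying `koBracket` to the cross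
product on `A³`, `A = ℝ[X]/(X^(m+1))`, with its third component scaled by `X`
(`e × f = X z`, `z × e = f`, `z × f = -e`). Over the commutative ring `A` antisymmetry and the
Jacobi identity of that bracket are polynomial identities, and they pull back along the encoding.
-/

open Polynomial

section TruncatedPolynomial

variable {R : Type*} [CommRing R]

lemma coeff_X_mul_ofFn_mul_ofFn [DecidableEq R] {M N : ℕ} (f : Fin M → R) (g : Fin N → R)
    (n : ℕ) :
    (X * ofFn M f * ofFn N g).coeff n =
      ∑ i : Fin M, ∑ j : Fin N, if (i : ℕ) + j + 1 = n then f i * g j else 0 := by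
  rw [ofFn_eq_sum_monomial, ofFn_eq_sum_monomial, Finset.mul_sum _ _ X, Finset.sum_mul_sum]
  simp only [finsetSum_coeff, X_mul_monomial, monomial_mul_monomial, coeff_monomial,
    Nat.add_right_comm]

abbrev TruncatedPoly (R : Type*) [CommRing R] (n : ℕ) := R[X] ⧸ Ideal.span {(X : R[X]) ^ n}

lemma mk_span_X_pow_eq_mk_iff {n : ℕ} {p q : R[X]} :
    Ideal.Quotient.mk (Ideal.span {(X : R[X]) ^ n}) p = Ideal.Quotient.mk _ q ↔
      ∀ d < n, p.coeff d = q.coeff d := by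
  simp [Ideal.Quotient.eq, Ideal.mem_span_singleton, X_pow_dvd_iff, sub_eq_zero]

end TruncatedPolynomial

section ScaledCross

variable {A : Type*} [CommRing A] (t : A)

def scaledCross (p q : A × A × A) : A × A × A :=
  (q.2.2 * p.2.1 - p.2.2 * q.2.1, p.2.2 * q.1 - q.2.2 * p.1, t * (p.1 * q.2.1 - p.2.1 * q.1))

lemma scaledCross_anticomm (p q : A × A × A) : scaledCross t p q = -scaledCross t q p := by
  simp only [scaledCross, Prod.neg_mk, Prod.mk.injEq]
  refine ⟨?_, ?_, ?_⟩ <;> ring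

lemma scaledCross_jacobi (p q r : A × A × A) :
    scaledCross t p (scaledCross t q r) + scaledCross t q (scaledCross t r p) +
      scaledCross t r (scaledCross t p q) = 0 := by
  simp only [scaledCross, Prod.mk_add_mk, Prod.mk_eq_zero]
  refine ⟨?_, ?_, ?_⟩ <;> ring

variable {S : Type*} [CommRing S] [Algebra S A]

lemma scaledCross_smul_add_left (c : S) (p p' q : A × A × A) :
    scaledCross t (c • p + p') q = c • scaledCross t p q + scaledCross t p' q := by
  ext <;> simp only [scaledCross, Prod.fst_add, Prod.snd_add, Prod.smul_fst, Prod.smul_snd] <;>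
    simp only [Algebra.smul_def] <;> ring

lemma scaledCross_smul_add_right (c : S) (p q q' : A × A × A) :
    scaledCross t p (c • q + q') = c • scaledCross t p q + scaledCross t p q' := by
  rw [scaledCross_anticomm, scaledCross_smul_add_left, scaledCross_anticomm t q,
    scaledCross_anticomm t q', smul_neg, neg_add, neg_neg, neg_neg]

end ScaledCross

noncomputable def koEmbed (m : ℕ) :
    KO m →ₗ[ℝ] TruncatedPoly ℝ (m + 1) × TruncatedPoly ℝ (m + 1) × TruncatedPoly ℝ (m + 1) where
  toFun x :=
    (Ideal.Quotient.mkₐ ℝ _ (ofFn (m + 1) fun a => (x.2 a).re),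
     Ideal.Quotient.mkₐ ℝ _ (ofFn (m + 1) fun a => (x.2 a).im),
     Ideal.Quotient.mkₐ ℝ _ (X * ofFn m x.1))
  map_add' x y := by
    have re : (fun a => ((x + y).2 a).re) = (fun a => (x.2 a).re) + fun a => (y.2 a).re := rfl
    have im : (fun a => ((x + y).2 a).im) = (fun a => (x.2 a).im) + fun a => (y.2 a).im := rfl
    have z : (x + y).1 = x.1 + y.1 := rfl
    simp only [re, im, z, map_add, mul_add, Prod.mk_add_mk]
  map_smul' c x := by
    have re : (fun a => ((c • x).2 a).re) = c • fun a => (x.2 a).re :=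
      funext fun a => Complex.smul_re c (x.2 a)
    have im : (fun a => ((c • x).2 a).im) = c • fun a => (x.2 a).im :=
      funext fun a => Complex.smul_im c (x.2 a)
    have z : (c • x).1 = c • x.1 := rfl
    simp only [re, im, z, map_smul, mul_smul_comm, Prod.smul_mk, RingHom.id_apply]

lemma koEmbed_apply {m : ℕ} (x : KO m) :
    koEmbed m x =
      (Ideal.Quotient.mk _ (ofFn (m + 1) fun a => (x.2 a).re),
       Ideal.Quotient.mk _ (ofFn (m + 1) fun a => (x.2 a).im),
       Ideal.Quotient.mk _ (X * ofFn m x.1)) := rfl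

lemma koEmbed_injective (m : ℕ) : Function.Injective (koEmbed m) := by
  intro x y h
  simp only [koEmbed_apply, Prod.mk.injEq, mk_span_X_pow_eq_mk_iff] at h
  obtain ⟨hre, him, hz⟩ := h
  refine Prod.ext (funext fun k => ?_) (funext fun a => Complex.ext ?_ ?_)
  · simpa [coeff_X_mul, k.isLt] using hz (k + 1) (by omega)
  · simpa [a.isLt] using hre a a.isLt
  · simpa [a.isLt] using him a a.isLt

lemma koEmbed_koBracket {m : ℕ} (x y : KO m) :
    koEmbed m (koBracket x y) =
      scaledCross (Ideal.Quotient.mk _ X) (koEmbed m x) (koEmbed m y) := by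
  simp only [koEmbed_apply, scaledCross, ← map_mul, ← map_sub, mul_sub, ← mul_assoc,
    Prod.mk.injEq, mk_span_X_pow_eq_mk_iff, coeff_sub, coeff_X_mul_ofFn_mul_ofFn]
  refine ⟨fun n hn => ?_, fun n hn => ?_, fun n hn => ?_⟩
  · rw [ofFn_coeff_eq_val_of_lt _ hn]
    simp [koBracket, Complex.mul_re, Complex.re_sum, Complex.im_sum, apply_ite]
  · rw [ofFn_coeff_eq_val_of_lt _ hn]
    simp [koBracket, Complex.mul_im, Complex.re_sum, Complex.im_sum, apply_ite]
  · rcases n with _ | k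
    · simp
    · rw [coeff_X_mul, ofFn_coeff_eq_val_of_lt _ (by omega), ← Finset.sum_sub_distrib]
      simp only [koBracket, ← Finset.sum_sub_distrib, add_left_inj]
      refine Finset.sum_congr rfl fun a _ => Finset.sum_congr rfl fun b _ => ?_
      split_ifs
      · simp only [Complex.mul_im, Complex.conj_re, Complex.conj_im]
        ring
      · simp

theorem koBracket_lieAlgebra_general (m : ℕ) :
    (∀ (c : ℝ) (x x' y : KO m),
      koBracket (c • x + x') y = c • koBracket x y + koBracket x' y) ∧
    (∀ (c : ℝ) (x y y' : KO m),
      koBracket x (c • y + y') = c • koBracket x y + koBracket x y') ∧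
    (∀ x y : KO m, koBracket x y = -koBracket y x) ∧
    (∀ x y z : KO m,
      koBracket x (koBracket y z) + koBracket y (koBracket z x) +
        koBracket z (koBracket x y) = 0) := by
  have injective := koEmbed_injective m
  refine ⟨fun c x x' y => injective ?_, fun c x y y' => injective ?_, fun x y => injective ?_,
    fun x y z => injective ?_⟩ <;>
    simp only [map_add, map_smul, map_neg, map_zero, koEmbed_koBracket]
  · exact scaledCross_smul_add_left _ c _ _ _
  · exact scaledCross_smul_add_right _ c _ _ _
  · exact scaledCross_anticomm _ _ _
  · exact scaledCross_jacobi _ _ _ _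

/-- For every positive integer `m`, the Kath–Olbrich bracket on `ℝ^m ⊕ ℂ^{m+1}` makes
it a (real) Lie algebra: the bracket is bilinear, antisymmetric (in particular
alternating) and satisfies the Jacobi identity.  Moreover it takes the prescribed
values on the basis: `[e_i, f_j] = z_{i+j-1}`, `[z_k, e_i] = f_{i+k}`,
`[z_k, f_j] = -e_{k+j}` (indices `1`-based in the mathematical notation, `0`-based
here, out-of-range indices giving `0`). -/
theorem koBracket_lieAlgebra (m : ℕ) (hm : 0 < m) :
    (∀ (c : ℝ) (x x' y : KO m),
      koBracket (c • x + x') y = c • koBracket x y + koBracket x' y) ∧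
    (∀ (c : ℝ) (x y y' : KO m),
      koBracket x (c • y + y') = c • koBracket x y + koBracket x y') ∧
    (∀ x y : KO m, koBracket x y = -koBracket y x) ∧
    (∀ x y z : KO m,
      koBracket x (koBracket y z) + koBracket y (koBracket z x) +
        koBracket z (koBracket x y) = 0) :=
  koBracket_lieAlgebra_general m
end

section
/- The Lie algebra 𝔤 = ℝ^m ⊕ ℂ^{m+1} of Kath–Olbrich (with brackets [e_i,f_j]=z_{i+j−1}, [z_k,e_i]=f_{i+k}, [z_k,f_j]=−e_{k+j}) is exactly (2m+1)-step nilpotent: the lower central series satisfies 𝔤^{2m+1} = 0 while 𝔤^{2m} ≠ 0. In particular, 𝔤^{2r−1} is spanned by {z_k : r ≤ k ≤ m} ∪ {e_i, f_i : r+1 ≤ i ≤ m+1} and 𝔤^{2r} is spanned by {z_k : r+1 ≤ k ≤ m} ∪ {e_i, f_i : r+1 ≤ i ≤ m+1}. -/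
open scoped BigOperators

/-- The lower central series `𝔤^0 = 𝔤`, `𝔤^{s+1} = [𝔤, 𝔤^s]` of the Kath–Olbrich
algebra, as submodules. -/
noncomputable def koLCS (m : ℕ) : ℕ → Submodule ℝ (KO m)
  | 0 => ⊤
  | s + 1 => Submodule.span ℝ
      {u : KO m | ∃ x y : KO m, y ∈ koLCS m s ∧ u = koBracket x y}

/-! Write `W(a, b)` for the span of the `z_k` with `k ≥ a` and the `e_i, f_i` with `i ≥ b`
(0-based indices), i.e. the vectors whose first `a` real and first `b` complex coordinates
vanish. The index of a bracket is the sum of the indices of its entries (plus one for `z`), so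
`[𝔤, W(a, b)] ⊆ W(b, a + 1)` when `a ≤ b`; conversely bracketing with `e_0` and `f_0` alone
already produces every generator of `W(b, a + 1)` from `W(a, b)`. Starting from `𝔤 = W(0, 0)`
this gives `𝔤^{2r} = W(r, r)` and `𝔤^{2r+1} = W(r, r + 1)`, and the series ends because
`W(m, m + 1) = 0` while `e_m ∈ W(m, m)`. The Lean name of `W(a, b)` is `koTail m a b`. -/

namespace KO

variable {m : ℕ}

@[ext] lemma ext {x y : KO m} (h₁ : x.1 = y.1) (h₂ : x.2 = y.2) : x = y := Prod.ext h₁ h₂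

noncomputable def fstₗ (m : ℕ) : KO m →ₗ[ℝ] (Fin m → ℝ) where
  toFun x := x.1
  map_add' _ _ := rfl
  map_smul' _ _ := rfl

noncomputable def sndₗ (m : ℕ) : KO m →ₗ[ℝ] (Fin (m + 1) → ℂ) where
  toFun x := x.2
  map_add' _ _ := rfl
  map_smul' _ _ := rfl

@[simp] lemma add_fst (x y : KO m) : (x + y).1 = x.1 + y.1 := rfl
@[simp] lemma add_snd (x y : KO m) : (x + y).2 = x.2 + y.2 := rfl
@[simp] lemma smul_fst (c : ℝ) (x : KO m) : (c • x).1 = c • x.1 := rfl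
@[simp] lemma smul_snd (c : ℝ) (x : KO m) : (c • x).2 = c • x.2 := rfl
@[simp] lemma neg_fst (x : KO m) : (-x).1 = -x.1 := rfl
@[simp] lemma neg_snd (x : KO m) : (-x).2 = -x.2 := rfl
@[simp] lemma zero_snd : (0 : KO m).2 = 0 := rfl

@[simp] lemma sum_fst {ι : Type*} (s : Finset ι) (x : ι → KO m) :
    (∑ i ∈ s, x i).1 = ∑ i ∈ s, (x i).1 :=
  map_sum (fstₗ m) x s

@[simp] lemma sum_snd {ι : Type*} (s : Finset ι) (x : ι → KO m) :
    (∑ i ∈ s, x i).2 = ∑ i ∈ s, (x i).2 :=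
  map_sum (sndₗ m) x s

end KO

@[simp] lemma koZ_fst {m : ℕ} (k : Fin m) : (koZ k).1 = Pi.single k 1 := rfl
@[simp] lemma koZ_snd {m : ℕ} (k : Fin m) : (koZ k).2 = 0 := rfl
@[simp] lemma koE_fst {m : ℕ} (i : Fin (m + 1)) : (koE i).1 = 0 := rfl
@[simp] lemma koE_snd {m : ℕ} (i : Fin (m + 1)) : (koE i).2 = Pi.single i 1 := rfl
@[simp] lemma koF_fst {m : ℕ} (i : Fin (m + 1)) : (koF i).1 = 0 := rfl
@[simp] lemma koF_snd {m : ℕ} (i : Fin (m + 1)) : (koF i).2 = Pi.single i Complex.I := rfl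

lemma KO.eq_sum_basis {m : ℕ} (x : KO m) :
    x = ∑ k, x.1 k • koZ k + ∑ i, ((x.2 i).re • koE i + (x.2 i).im • koF i) := by
  ext j
  · simp [Pi.single_apply]
  · have h (i : Fin (m + 1)) : (x.2 i).re • (Pi.single i 1 : Fin (m + 1) → ℂ) +
        (x.2 i).im • (Pi.single i Complex.I : Fin (m + 1) → ℂ) = Pi.single i (x.2 i) := by
      rw [← Pi.single_smul', ← Pi.single_smul', ← Pi.single_add]
      simp [Complex.re_add_im]
    simp [h]

noncomputable def koTail (m a b : ℕ) : Submodule ℝ (KO m) where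
  carrier := {x | (∀ k : Fin m, (k : ℕ) < a → x.1 k = 0) ∧
    (∀ i : Fin (m + 1), (i : ℕ) < b → x.2 i = 0)}
  add_mem' hx hy := ⟨fun k hk => by simp [hx.1 k hk, hy.1 k hk],
    fun i hi => by simp [hx.2 i hi, hy.2 i hi]⟩
  zero_mem' := ⟨fun _ _ => rfl, fun _ _ => rfl⟩
  smul_mem' c x hx := ⟨fun k hk => by simp [hx.1 k hk], fun i hi => by simp [hx.2 i hi]⟩

section koTail

variable {m a b : ℕ}

lemma koZ_mem_koTail {k : Fin m} (hk : a ≤ k) : koZ k ∈ koTail m a b :=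
  ⟨fun κ hκ => Pi.single_eq_of_ne (by omega) _, fun _ _ => rfl⟩

lemma koE_mem_koTail {i : Fin (m + 1)} (hi : b ≤ i) : koE i ∈ koTail m a b :=
  ⟨fun _ _ => rfl, fun j hj => Pi.single_eq_of_ne (by omega) _⟩

lemma koF_mem_koTail {i : Fin (m + 1)} (hi : b ≤ i) : koF i ∈ koTail m a b :=
  ⟨fun _ _ => rfl, fun j hj => Pi.single_eq_of_ne (by omega) _⟩

lemma koTail_eq_span :
    koTail m a b = Submodule.span ℝ
      ({v | ∃ k : Fin m, a ≤ (k : ℕ) ∧ v = koZ k} ∪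
       {v | ∃ i : Fin (m + 1), b ≤ (i : ℕ) ∧ (v = koE i ∨ v = koF i)}) := by
  apply le_antisymm
  · rintro x ⟨hx₁, hx₂⟩
    rw [KO.eq_sum_basis x]
    refine add_mem (sum_mem fun k _ => ?_) (sum_mem fun i _ => ?_)
    · by_cases hk : (k : ℕ) < a
      · simp [hx₁ k hk]
      · exact Submodule.smul_mem _ _ (Submodule.subset_span (.inl ⟨k, by omega, rfl⟩))
    · by_cases hi : (i : ℕ) < b
      · simp [hx₂ i hi]
      · exact add_mem
          (Submodule.smul_mem _ _ (Submodule.subset_span (.inr ⟨i, by omega, .inl rfl⟩)))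
          (Submodule.smul_mem _ _ (Submodule.subset_span (.inr ⟨i, by omega, .inr rfl⟩)))
  · rw [Submodule.span_le]
    rintro v (⟨k, hk, rfl⟩ | ⟨i, hi, rfl | rfl⟩)
    exacts [koZ_mem_koTail hk, koE_mem_koTail hi, koF_mem_koTail hi]

lemma koTail_self_succ : koTail m m (m + 1) = ⊥ :=
  eq_bot_iff.2 fun _ ⟨hx₁, hx₂⟩ =>
    KO.ext (funext fun k => hx₁ k k.isLt) (funext fun i => hx₂ i i.isLt)

lemma koTail_self_ne_bot : koTail m m m ≠ ⊥ := by
  intro h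
  have : koE (Fin.last m) = 0 := (Submodule.mem_bot ℝ).1 (h ▸ koE_mem_koTail le_rfl)
  simpa using congr($this.2 (Fin.last m))

end koTail

lemma koBracket_mem_koTail {m a b : ℕ} (hab : a ≤ b) (x : KO m) {y : KO m}
    (hy : y ∈ koTail m a b) : koBracket x y ∈ koTail m b (a + 1) := by
  refine ⟨fun k hk => ?_, fun i hi => ?_⟩
  · simp only [koBracket]
    exact Finset.sum_eq_zero fun α _ => Finset.sum_eq_zero fun β _ => ite_eq_right_iff.2
      fun h => by rw [hy.2 β (by omega), mul_zero, Complex.zero_im]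
  · have h₁ : (∑ κ : Fin m, ∑ α : Fin (m + 1),
        if (κ : ℕ) + α + 1 = i then (x.1 κ : ℂ) * y.2 α else 0) = 0 :=
      Finset.sum_eq_zero fun κ _ => Finset.sum_eq_zero fun α _ => ite_eq_right_iff.2
        fun h => by rw [hy.2 α (by omega), mul_zero]
    have h₂ : (∑ κ : Fin m, ∑ α : Fin (m + 1),
        if (κ : ℕ) + α + 1 = i then (y.1 κ : ℂ) * x.2 α else 0) = 0 :=
      Finset.sum_eq_zero fun κ _ => Finset.sum_eq_zero fun α _ => ite_eq_right_iff.2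
        fun h => by rw [hy.1 κ (by omega), Complex.ofReal_zero, zero_mul]
    simp only [koBracket]
    rw [h₁, h₂, sub_self, mul_zero]

lemma koBracket_koE_zero_koF {m : ℕ} (k : Fin m) :
    koBracket (koE 0) (koF k.castSucc) = koZ k := by
  ext κ
  · simp only [koBracket, koE_snd, koF_snd, koZ_fst]
    rw [Fintype.sum_eq_single 0 fun a ha => by simp [Pi.single_eq_of_ne ha]]
    rw [Fintype.sum_eq_single k.castSucc fun b hb => by simp [Pi.single_eq_of_ne hb]]
    simp [Pi.single_apply, Fin.ext_iff, eq_comm]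
  · simp [koBracket]

lemma koBracket_single_zero_koZ {m : ℕ} (w : ℂ) (κ : Fin m) :
    koBracket ((0, Pi.single 0 w) : KO m) (koZ κ) =
      ((0, Pi.single κ.succ (-(Complex.I * w))) : KO m) := by
  ext i
  · simp [koBracket]
  · simp only [koBracket, koZ_fst, koZ_snd, Pi.zero_apply, Complex.ofReal_zero, mul_zero,
      ite_self, Finset.sum_const_zero, zero_sub]
    rw [Fintype.sum_eq_single κ fun a ha => by simp [Pi.single_eq_of_ne ha]]
    rw [Fintype.sum_eq_single 0 fun b hb => by simp [Pi.single_eq_of_ne hb]]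
    simp only [Pi.single_eq_same, Fin.val_zero, add_zero, ← Fin.val_succ, Fin.val_inj,
      Pi.single_apply, eq_comm (a := i)]
    split_ifs <;> simp

lemma koBracket_koF_zero_koZ {m : ℕ} (κ : Fin m) :
    koBracket (koF 0) (koZ κ) = koE κ.succ := by
  rw [koF, koBracket_single_zero_koZ, Complex.I_mul_I, neg_neg]
  rfl

lemma koBracket_koE_zero_koZ {m : ℕ} (κ : Fin m) :
    koBracket (koE 0) (koZ κ) = -koF κ.succ := by
  rw [koE, koBracket_single_zero_koZ, mul_one]
  ext <;> simp [Pi.single_apply, apply_ite]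

section koLCS

variable {m : ℕ}

lemma koLCS_succ_of_eq_koTail {s a b : ℕ} (hab : a ≤ b) (h : koLCS m s = koTail m a b) :
    koLCS m (s + 1) = koTail m b (a + 1) := by
  have bracket_mem {x y : KO m} (hy : y ∈ koTail m a b) : koBracket x y ∈ koLCS m (s + 1) :=
    Submodule.subset_span ⟨x, y, h ▸ hy, rfl⟩
  apply le_antisymm
  · refine Submodule.span_le.2 ?_
    rintro _ ⟨x, y, hy, rfl⟩
    exact koBracket_mem_koTail hab x (h ▸ hy)
  · rw [koTail_eq_span, Submodule.span_le]
    rintro _ (⟨k, hk, rfl⟩ | ⟨i, hi, rfl | rfl⟩)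
    · rw [← koBracket_koE_zero_koF]
      exact bracket_mem (koF_mem_koTail (by simpa using hk))
    all_goals
      obtain ⟨κ, rfl⟩ := (Fin.exists_succ_eq (x := i)).2 (by rintro rfl; simp at hi)
      have hκ : koZ κ ∈ koTail m a b := koZ_mem_koTail (by simpa using hi)
    · rw [← koBracket_koF_zero_koZ]
      exact bracket_mem hκ
    · rw [← neg_neg (koF κ.succ), ← koBracket_koE_zero_koZ]
      exact neg_mem (bracket_mem hκ)

lemma koLCS_two_mul (r : ℕ) : koLCS m (2 * r) = koTail m r r := by
  induction r with
  | zero => exact (eq_top_iff.2 fun _ _ => ⟨fun _ h => absurd h (by omega),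
      fun _ h => absurd h (by omega)⟩).symm
  | succ r ih =>
    exact koLCS_succ_of_eq_koTail (by omega) (koLCS_succ_of_eq_koTail le_rfl ih)

lemma koLCS_two_mul_add_one (r : ℕ) : koLCS m (2 * r + 1) = koTail m r (r + 1) :=
  koLCS_succ_of_eq_koTail le_rfl (koLCS_two_mul r)

end koLCS

theorem koLCS_nilpotency_general (m : ℕ) :
    koLCS m (2 * m + 1) = ⊥ ∧ koLCS m (2 * m) ≠ ⊥ ∧
    ∀ r : ℕ, 1 ≤ r → r ≤ m →
      (koLCS m (2 * r - 1) = Submodule.span ℝ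
        ({v : KO m | ∃ k : Fin m, r ≤ (k : ℕ) + 1 ∧ v = koZ k} ∪
         {v : KO m | ∃ i : Fin (m + 1), r + 1 ≤ (i : ℕ) + 1 ∧ (v = koE i ∨ v = koF i)})) ∧
      (koLCS m (2 * r) = Submodule.span ℝ
        ({v : KO m | ∃ k : Fin m, r + 1 ≤ (k : ℕ) + 1 ∧ v = koZ k} ∪
         {v : KO m | ∃ i : Fin (m + 1), r + 1 ≤ (i : ℕ) + 1 ∧ (v = koE i ∨ v = koF i)})) := by
  refine ⟨?_, ?_, fun r hr _ => ⟨?_, ?_⟩⟩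
  · rw [koLCS_two_mul_add_one, koTail_self_succ]
  · rw [koLCS_two_mul]
    exact koTail_self_ne_bot
  · obtain ⟨r, rfl⟩ := Nat.exists_eq_add_of_le' hr
    rw [show 2 * (r + 1) - 1 = 2 * r + 1 by omega, koLCS_two_mul_add_one, koTail_eq_span]
    simp only [add_le_add_iff_right]
  · rw [koLCS_two_mul, koTail_eq_span]
    simp only [add_le_add_iff_right]

/-- The Kath–Olbrich Lie algebra `𝔤 = ℝ^m ⊕ ℂ^{m+1}` is exactly `(2m+1)`-step
nilpotent: `𝔤^{2m+1} = 0` while `𝔤^{2m} ≠ 0`; moreover for `1 ≤ r ≤ m`, the term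
`𝔤^{2r-1}` is spanned by `{z_k : r ≤ k ≤ m} ∪ {e_i, f_i : r+1 ≤ i ≤ m+1}` and
`𝔤^{2r}` is spanned by `{z_k : r+1 ≤ k ≤ m} ∪ {e_i, f_i : r+1 ≤ i ≤ m+1}`
(1-based indices; here stored 0-based). -/
theorem koLCS_nilpotency (m : ℕ) (hm : 0 < m) :
    koLCS m (2 * m + 1) = ⊥ ∧ koLCS m (2 * m) ≠ ⊥ ∧
    ∀ r : ℕ, 1 ≤ r → r ≤ m →
      (koLCS m (2 * r - 1) = Submodule.span ℝ
        ({v : KO m | ∃ k : Fin m, r ≤ (k : ℕ) + 1 ∧ v = koZ k} ∪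
         {v : KO m | ∃ i : Fin (m + 1), r + 1 ≤ (i : ℕ) + 1 ∧ (v = koE i ∨ v = koF i)})) ∧
      (koLCS m (2 * r) = Submodule.span ℝ
        ({v : KO m | ∃ k : Fin m, r + 1 ≤ (k : ℕ) + 1 ∧ v = koZ k} ∪
         {v : KO m | ∃ i : Fin (m + 1), r + 1 ≤ (i : ℕ) + 1 ∧ (v = koE i ∨ v = koF i)})) :=
  koLCS_nilpotency_general m
end

section
/- On the Kath–Olbrich Lie algebra 𝔤 = ℝ^m ⊕ ℂ^{m+1}, the symmetric bilinear form defined by ⟨e_i, e_j⟩ = ⟨f_i, f_j⟩ = δ_{i+j, m+2}, ⟨z_k, z_ℓ⟩ = δ_{k+ℓ, m+1}, ⟨e_i, f_j⟩ = 0, and ℝ^m ⊥ ℂ^{m+1}, is nondegenerate and invariant: ⟨[x,y], z⟩ = ⟨x, [y,z]⟩ for all x, y, z ∈ 𝔤. -/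
open scoped BigOperators

/-- The Kath–Olbrich scalar product on `𝔤 = ℝ^m ⊕ ℂ^{m+1}`:
`⟨e_i, e_j⟩ = ⟨f_i, f_j⟩ = δ_{i+j,m+2}`, `⟨z_k, z_ℓ⟩ = δ_{k+ℓ,m+1}`, `⟨e_i, f_j⟩ = 0`
and `ℝ^m ⊥ ℂ^{m+1}`.  In closed form (0-based indices, using `Fin.rev`):
`⟨(z,w),(z',w')⟩ = ∑_κ z_κ z'_{m-1-κ} + ∑_a Re(conj(w_a) w'_{m-a})`. -/
noncomputable def koForm {m : ℕ} (x y : KO m) : ℝ :=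
  (∑ κ : Fin m, x.1 κ * y.1 κ.rev) +
    ∑ a : Fin (m + 1), ((starRingEnd ℂ) (x.2 a) * y.2 a.rev).re

/-! With `C(p; u, v) = ∑_{κ+a+b+1=m} p_κ Im(ū_a v_b)` (`koCubic`), antisymmetric in `u, v`,
expanding the bracket gives `⟨[x,y],z⟩ = C(z₁; x₂, y₂) + C(x₁; y₂, z₂) − C(y₁; x₂, z₂)`.
By antisymmetry this is invariant under the cyclic shift `(x,y,z) ↦ (y,z,x)`, so with symmetry
of the form `⟨[x,y],z⟩ = ⟨[y,z],x⟩ = ⟨x,[y,z]⟩`. Nondegeneracy: pairing with `z_{m+1-k}`, `e_{m+2-i}` and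
`f_{m+2-i}` reads off the coordinates of `x`. -/

theorem Fin.sum_univ_rev {n : ℕ} {M : Type*} [AddCommMonoid M] (f : Fin n → M) :
    ∑ i : Fin n, f i.rev = ∑ i, f i :=
  Equiv.sum_comp Fin.revPerm f

theorem sum_mul_rev_comm {n : ℕ} (p q : Fin n → ℝ) :
    ∑ i, p i * q i.rev = ∑ i, q i * p i.rev := by
  rw [← Fin.sum_univ_rev]
  simp only [Fin.rev_rev, mul_comm]

theorem sum_re_conj_mul_rev_comm {n : ℕ} (u v : Fin n → ℂ) :
    ∑ i, ((starRingEnd ℂ) (u i) * v i.rev).re = ∑ i, ((starRingEnd ℂ) (v i) * u i.rev).re := by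
  rw [← Fin.sum_univ_rev]
  refine Finset.sum_congr rfl fun i _ => ?_
  simp only [Fin.rev_rev, Complex.mul_re, Complex.conj_re, Complex.conj_im]
  ring

section KathOlbrich

variable {m : ℕ}

theorem koForm_comm (x y : KO m) : koForm x y = koForm y x := by
  rw [koForm, koForm, sum_mul_rev_comm, sum_re_conj_mul_rev_comm]

theorem koForm_koZ_rev (x : KO m) (k : Fin m) : koForm x (koZ k.rev) = x.1 k := by
  simp [koForm, koZ, Pi.single_apply]

theorem koForm_koE_rev (x : KO m) (i : Fin (m + 1)) : koForm x (koE i.rev) = (x.2 i).re := by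
  simp [koForm, koE, Pi.single_apply, apply_ite Complex.re]

theorem koForm_koF_rev (x : KO m) (i : Fin (m + 1)) : koForm x (koF i.rev) = (x.2 i).im := by
  simp [koForm, koF, Pi.single_apply, apply_ite Complex.re]

theorem eq_zero_of_forall_koForm_eq_zero {x : KO m} (hx : ∀ y : KO m, koForm x y = 0) : x = 0 := by
  have hp (k : Fin m) : x.1 k = 0 := (koForm_koZ_rev x k).symm.trans (hx _)
  have hu (i : Fin (m + 1)) : x.2 i = 0 := Complex.ext
    ((koForm_koE_rev x i).symm.trans (hx _)) ((koForm_koF_rev x i).symm.trans (hx _))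
  show x = ((0 : Fin m → ℝ), (0 : Fin (m + 1) → ℂ))
  exact Prod.ext (funext hp) (funext hu)

noncomputable def koCubic (p : Fin m → ℝ) (u v : Fin (m + 1) → ℂ) : ℝ :=
  ∑ κ : Fin m, ∑ a : Fin (m + 1), ∑ b : Fin (m + 1),
    if (κ : ℕ) + a + b + 1 = m then p κ * ((starRingEnd ℂ) (u a) * v b).im else 0

theorem koCubic_swap (p : Fin m → ℝ) (u v : Fin (m + 1) → ℂ) :
    koCubic p v u = -koCubic p u v := by
  simp only [koCubic, ← Finset.sum_neg_distrib]
  refine Finset.sum_congr rfl fun κ _ => ?_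
  rw [Finset.sum_comm]
  refine Finset.sum_congr rfl fun a _ => Finset.sum_congr rfl fun b _ => ?_
  rw [add_right_comm (κ : ℕ) (b : ℕ) (a : ℕ), apply_ite Neg.neg, neg_zero]
  refine if_congr Iff.rfl ?_ rfl
  simp only [Complex.mul_im, Complex.conj_re, Complex.conj_im]
  ring

theorem koBracket_fst (x y : KO m) :
    (koBracket x y).1 = fun k : Fin m => ∑ a : Fin (m + 1), ∑ b : Fin (m + 1),
      if (a : ℕ) + (b : ℕ) = (k : ℕ) then ((starRingEnd ℂ) (x.2 a) * y.2 b).im else 0 :=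
  rfl

theorem sum_koBracket_fst_mul_rev (x y : KO m) (p : Fin m → ℝ) :
    ∑ κ, (koBracket x y).1 κ * p κ.rev = koCubic p x.2 y.2 := by
  rw [← Fin.sum_univ_rev]
  refine Finset.sum_congr rfl fun κ _ => ?_
  rw [Fin.rev_rev, koBracket_fst, Finset.sum_mul]
  refine Finset.sum_congr rfl fun a _ => ?_
  rw [Finset.sum_mul]
  refine Finset.sum_congr rfl fun b _ => ?_
  rw [ite_mul, zero_mul, Fin.val_rev]
  exact if_congr (by omega) (mul_comm _ _) rfl

noncomputable def koShift (p : Fin m → ℝ) (v : Fin (m + 1) → ℂ) (b : Fin (m + 1)) : ℂ :=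
  ∑ κ : Fin m, ∑ a : Fin (m + 1), if (κ : ℕ) + (a : ℕ) + 1 = (b : ℕ) then (p κ : ℂ) * v a else 0

theorem koBracket_snd (x y : KO m) :
    (koBracket x y).2 = fun b => Complex.I * (koShift x.1 y.2 b - koShift y.1 x.2 b) :=
  rfl

theorem sum_re_conj_I_mul_koShift (p : Fin m → ℝ) (v w : Fin (m + 1) → ℂ) :
    ∑ c, ((starRingEnd ℂ) (Complex.I * koShift p v c) * w c.rev).re = koCubic p v w := by
  have re_conj_I_mul (s t : ℂ) : ((starRingEnd ℂ) (Complex.I * s) * t).re =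
      ((starRingEnd ℂ) s * t).im := by
    simp only [Complex.mul_re, Complex.mul_im, Complex.conj_re, Complex.conj_im,
      Complex.I_re, Complex.I_im]
    ring
  simp only [re_conj_I_mul]
  simp only [koShift, map_sum, apply_ite (starRingEnd ℂ), map_zero, map_mul,
    Complex.conj_ofReal, Finset.sum_mul, ite_mul, zero_mul, Complex.im_sum,
    apply_ite Complex.im, Complex.zero_im, mul_assoc, Complex.im_ofReal_mul]
  rw [← Fin.sum_univ_rev, koCubic, Finset.sum_comm]
  refine Finset.sum_congr rfl fun κ _ => ?_
  rw [Finset.sum_comm]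
  refine Finset.sum_congr rfl fun a _ => Finset.sum_congr rfl fun b _ => ?_
  rw [Fin.rev_rev, Fin.val_rev]
  exact if_congr (by omega) rfl rfl

theorem koForm_koBracket (x y z : KO m) :
    koForm (koBracket x y) z = koCubic z.1 x.2 y.2 + koCubic x.1 y.2 z.2 - koCubic y.1 x.2 z.2 := by
  have h_complex : ∑ c, ((starRingEnd ℂ) ((koBracket x y).2 c) * z.2 c.rev).re =
      koCubic x.1 y.2 z.2 - koCubic y.1 x.2 z.2 := by
    simp only [koBracket_snd, mul_sub, map_sub, sub_mul, Complex.sub_re, Finset.sum_sub_distrib,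
      sum_re_conj_I_mul_koShift]
  rw [koForm, sum_koBracket_fst_mul_rev, h_complex]
  ring

end KathOlbrich

theorem koForm_nondegenerate_invariant_general (m : ℕ) :
    (∀ x y : KO m, koForm x y = koForm y x) ∧
    (∀ x : KO m, (∀ y : KO m, koForm x y = 0) → x = 0) ∧
    (∀ x y z : KO m, koForm (koBracket x y) z = koForm x (koBracket y z)) := by
  refine ⟨koForm_comm, fun x => eq_zero_of_forall_koForm_eq_zero, fun x y z => ?_⟩
  rw [koForm_comm x (koBracket y z), koForm_koBracket, koForm_koBracket, koCubic_swap y.1 z.2,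
    koCubic_swap z.1 y.2]
  ring

/-- The Kath–Olbrich bilinear form is symmetric, nondegenerate, and invariant
(associative with respect to the bracket): `⟨[x,y], z⟩ = ⟨x, [y,z]⟩`. -/
theorem koForm_nondegenerate_invariant (m : ℕ) (hm : 0 < m) :
    (∀ x y : KO m, koForm x y = koForm y x) ∧
    (∀ x : KO m, (∀ y : KO m, koForm x y = 0) → x = 0) ∧
    (∀ x y z : KO m, koForm (koBracket x y) z = koForm x (koBracket y z)) :=
  koForm_nondegenerate_invariant_general m
end

section
/- Let 𝔤 = 𝔪 + 𝔥 be a reductive decomposition for a geodesic orbit pseudo-Riemannian homogeneous space, let 𝔫 ⊆ 𝔪 be the nilradical of 𝔤, and suppose the restriction of the scalar product to [𝔫,𝔫] is positive or negative definite. If for each X ∈ 𝔪 there exists A ∈ 𝔥 with ⟨[X+A, Z]_𝔪, X⟩ = k⟨X,Z⟩ for all Z ∈ 𝔪, then 𝔫 is at most 2-step nilpotent: [𝔫,[𝔫,𝔫]] = 0. -/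
/-!
Write `𝔡 = [𝔫, 𝔫]`. For `ζ ∈ 𝔪` orthogonal to `𝔡` and `u ∈ 𝔡`, the geodesic orbit condition at
`X = ζ + t u`, for two values of `t`, forces `⟨[ζ, u], u⟩ = 0`, so `ad ζ` is skew on `𝔡`. If also
`ζ ∈ 𝔫`, then `ad ζ` is nilpotent, and a nilpotent skew operator on a definite space vanishes.
As `𝔫 = 𝔡 + (𝔫 ∩ 𝔡^⊥)`, this gives `[𝔫, 𝔡] = [𝔡, 𝔡] ⊆ [𝔫, [𝔫, 𝔡]]` by the Jacobi identity,
and an ideal `T ⊆ 𝔫` with `T ⊆ [𝔫, T]` vanishes because `𝔫` is nilpotent.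
-/

namespace LieSubmodule

variable {R L M : Type*} [CommRing R] [LieRing L] [LieAlgebra R L]
  [AddCommGroup M] [Module R M] [LieRingModule L M] [LieModule R L M]

theorem eq_bot_of_le_top_lie [LieModule.IsNilpotent L M] (N : LieSubmodule R L M)
    (h : N ≤ ⁅(⊤ : LieIdeal R L), N⁆) : N = ⊥ := by
  obtain ⟨k, hk⟩ := LieModule.IsNilpotent.nilpotent R L M
  have hle : ∀ n, N ≤ LieModule.lowerCentralSeries R L M n := by
    intro n
    induction n with
    | zero => exact le_top
    | succ n ih => exact h.trans (LieModule.lowerCentralSeries_succ R L M n ▸ mono_lie_right _ ih)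
  exact _root_.eq_bot_iff.mpr (hk ▸ hle k)

theorem lie_lie_le {I J : LieIdeal R L} {N : LieSubmodule R L M} :
    ⁅⁅I, J⁆, N⁆ ≤ ⁅I, ⁅J, N⁆⁆ ⊔ ⁅J, ⁅I, N⁆⁆ := by
  rw [lie_le_iff]
  intro z hz m hm
  rw [← mem_toSubmodule, lieIdeal_oper_eq_linear_span'] at hz
  induction hz using Submodule.span_induction with
  | mem z hz =>
    obtain ⟨x, hx, y, hy, rfl⟩ := hz
    rw [lie_lie]
    exact sub_mem (mem_sup_left (lie_mem_lie hx (lie_mem_lie hy hm)))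
      (mem_sup_right (lie_mem_lie hy (lie_mem_lie hx hm)))
  | zero => simp
  | add z w _ _ hz hw => rw [add_lie]; exact add_mem hz hw
  | smul r z _ hz => rw [smul_lie]; exact Submodule.smul_mem _ r hz

end LieSubmodule

namespace LieIdeal

variable {R L : Type*} [CommRing R] [LieRing L] [LieAlgebra R L]

theorem isNilpotent_ad_of_mem (I : LieIdeal R L) [LieRing.IsNilpotent I] {x : L} (hx : x ∈ I) :
    IsNilpotent (LieAlgebra.ad R L x) := by
  obtain ⟨k, hk⟩ := LieAlgebra.nilpotent_ad_of_nilpotent_algebra R I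
  refine ⟨k + 1, LinearMap.ext fun y => ?_⟩
  have h : ((LieAlgebra.ad R I ⟨x, hx⟩ ^ k) ⟨⁅x, y⁆, lie_mem_left R L I x y hx⟩ : L) =
      (LieAlgebra.ad R L x ^ k) ⁅x, y⁆ :=
    LieSubalgebra.coe_ad_pow R L (I : LieSubalgebra R L) _ _ k
  rw [hk] at h
  rw [pow_succ, Module.End.mul_apply, LieAlgebra.ad_apply]
  simpa using h.symm

theorem eq_bot_of_le_lie_of_isNilpotent {I J : LieIdeal R L} [LieRing.IsNilpotent I]
    (hJI : J ≤ I) (h : J ≤ ⁅I, J⁆) : J = ⊥ := by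
  have : J.comap I.incl = ⊥ := LieSubmodule.eq_bot_of_le_top_lie _ (by
    rw [← comap_incl_self I, comap_bracket_incl_of_le I le_rfl hJI]; exact comap_mono h)
  rwa [comap_incl_eq_bot, disjoint_iff, inf_eq_right.mpr hJI] at this

end LieIdeal

namespace LinearMap.BilinForm

theorem apply_eq_zero_of_isNilpotent {R M : Type*} [CommRing R] [AddCommGroup M] [Module R M]
    (B : LinearMap.BilinForm R M) {D : Submodule R M} (hD : ∀ x ∈ D, B x x = 0 → x = 0)
    {f : Module.End R M} (hf : IsNilpotent f) (hfD : ∀ x ∈ D, f x ∈ D)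
    (hskew : ∀ x ∈ D, B (f x) x = 0) {x : M} (hx : x ∈ D) : f x = 0 := by
  have hpolar : ∀ x ∈ D, ∀ y ∈ D, B (f x) y + B (f y) x = 0 := by
    intro x hx y hy
    have h := hskew (x + y) (add_mem hx hy)
    simp only [map_add, LinearMap.add_apply, hskew x hx, hskew y hy] at h
    linear_combination h
  obtain ⟨n, hn⟩ := hf
  suffices ∀ n, ∀ x ∈ D, (f ^ n) x = 0 → f x = 0 from this n x hx (by simp [hn])
  intro n
  induction n with
  | zero => intro x _ h; simp_all
  | succ n ih =>
    intro x hx h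
    have hffx : f (f x) = 0 := ih (f x) (hfD x hx) (by rwa [← Module.End.mul_apply, ← pow_succ])
    apply hD _ (hfD x hx)
    simpa [hffx] using hpolar x hx (f x) (hfD x hx)

theorem eq_zero_of_apply_self_eq_zero_of_definite {R M : Type*} [CommRing R] [PartialOrder R]
    [AddCommGroup M] [Module R M] {B : LinearMap.BilinForm R M} {W : Submodule R M}
    (hW : (∀ x ∈ W, x ≠ 0 → 0 < B x x) ∨ (∀ x ∈ W, x ≠ 0 → B x x < 0)) {x : M} (hx : x ∈ W)
    (hxx : B x x = 0) : x = 0 := by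
  by_contra hx0
  rcases hW with hpos | hneg
  · exact (hpos x hx hx0).ne' hxx
  · exact (hneg x hx hx0).ne hxx

theorem nondegenerate_restrict_of_anisotropic {R M : Type*} [CommRing R] [AddCommGroup M]
    [Module R M] {B : LinearMap.BilinForm R M} {W : Submodule R M}
    (hW : ∀ x ∈ W, B x x = 0 → x = 0) : (B.restrict W).Nondegenerate :=
  ⟨fun x hx => Subtype.ext (hW x x.2 (hx x)), fun x hx => Subtype.ext (hW x x.2 (hx x))⟩

theorem exists_mem_forall_sub_apply_eq_zero {K V : Type*} [Field K] [AddCommGroup V]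
    [Module K V] (B : LinearMap.BilinForm K V) {W : Submodule K V} [FiniteDimensional K W]
    (hW : (B.restrict W).Nondegenerate) (x : V) : ∃ w ∈ W, ∀ y ∈ W, B (x - w) y = 0 := by
  let w := ((B.restrict W).toDual hW).symm ((B x).domRestrict W)
  refine ⟨w, w.2, fun y hy => ?_⟩
  have : B w y = B x y := apply_toDual_symm_apply (B := B.restrict W) _ ⟨y, hy⟩
  rw [map_sub, LinearMap.sub_apply, this, sub_self]

end LinearMap.BilinForm

section GeodesicOrbit

variable {L : Type*} [LieRing L] [LieAlgebra ℝ L] {𝔥 : LieSubalgebra ℝ L} {𝔪 : Submodule ℝ L}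
  {B : LinearMap.BilinForm ℝ L}

theorem exists_lie_apply_eq_of_projection_apply_eq (hcompl : IsCompl 𝔪 𝔥.toSubmodule)
    (hred : ∀ A ∈ 𝔥, ∀ X ∈ 𝔪, ⁅A, X⁆ ∈ 𝔪)
    (hgo : ∀ X ∈ 𝔪, ∃ A ∈ 𝔥, ∃ k : ℝ, ∀ Z ∈ 𝔪,
      B ((𝔪.projectionOnto 𝔥.toSubmodule hcompl ⁅X + A, Z⁆ : 𝔪) : L) X = k * B X Z) :
    ∀ X ∈ 𝔪, ∃ A ∈ 𝔥, ∃ k : ℝ, ∀ Z ∈ 𝔪, ⁅X, Z⁆ ∈ 𝔪 → B ⁅X + A, Z⁆ X = k * B X Z := by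
  intro X hX
  obtain ⟨A, hA, k, hk⟩ := hgo X hX
  refine ⟨A, hA, k, fun Z hZ hXZ => ?_⟩
  have hmem : ⁅X + A, Z⁆ ∈ 𝔪 := by rw [add_lie]; exact add_mem hXZ (hred A hA Z hZ)
  rw [← hk Z hZ, Submodule.projectionOnto_apply_left hcompl ⟨_, hmem⟩]

theorem bilin_lie_self_eq_zero (hred : ∀ A ∈ 𝔥, ∀ X ∈ 𝔪, ⁅A, X⁆ ∈ 𝔪)
    (hsymm : ∀ X ∈ 𝔪, ∀ Z ∈ 𝔪, B X Z = B Z X)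
    (hinv : ∀ A ∈ 𝔥, ∀ X ∈ 𝔪, ∀ Z ∈ 𝔪, B ⁅A, X⁆ Z + B X ⁅A, Z⁆ = 0)
    {A : L} (hA : A ∈ 𝔥) {X : L} (hX : X ∈ 𝔪) : B ⁅A, X⁆ X = 0 := by
  have h := hinv A hA X hX X hX
  rw [hsymm X hX _ (hred A hA X hX)] at h
  linarith

variable {𝔡 : LieIdeal ℝ L} {ζ u : L}

/-- The geodesic orbit condition at `X = ζ + t • u`, tested against `Z = u` and `Z = ζ`. -/
theorem exists_geodesic_ratio (hred : ∀ A ∈ 𝔥, ∀ X ∈ 𝔪, ⁅A, X⁆ ∈ 𝔪)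
    (hsymm : ∀ X ∈ 𝔪, ∀ Z ∈ 𝔪, B X Z = B Z X)
    (hinv : ∀ A ∈ 𝔥, ∀ X ∈ 𝔪, ∀ Z ∈ 𝔪, B ⁅A, X⁆ Z + B X ⁅A, Z⁆ = 0)
    (hgo : ∀ X ∈ 𝔪, ∃ A ∈ 𝔥, ∃ k : ℝ, ∀ Z ∈ 𝔪, ⁅X, Z⁆ ∈ 𝔪 → B ⁅X + A, Z⁆ X = k * B X Z)
    (h𝔡 : LieSubmodule.toSubmodule 𝔡 ≤ 𝔪) (hζ : ζ ∈ 𝔪) (hperp : ∀ d ∈ 𝔡, B ζ d = 0)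
    (hu : u ∈ 𝔡) (t : ℝ) :
    ∃ k : ℝ, t * B ⁅ζ, u⁆ u = k * (t * B u u) ∧ -(t * t) * B ⁅ζ, u⁆ u = k * B ζ ζ := by
  have hum : u ∈ 𝔪 := h𝔡 hu
  have hperp' : ∀ d ∈ 𝔡, B d ζ = 0 := fun d hd => (hsymm d (h𝔡 hd) ζ hζ).trans (hperp d hd)
  obtain ⟨A, hA, k, hk⟩ := hgo (ζ + t • u) (add_mem hζ (Submodule.smul_mem _ t hum))
  have hζu : ⁅ζ, u⁆ ∈ 𝔡 := 𝔡.lie_mem hu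
  have huζ : ⁅u, ζ⁆ ∈ 𝔡 := lie_mem_left ℝ L 𝔡 u ζ hu
  have hAu : ⁅A, u⁆ ∈ 𝔡 := 𝔡.lie_mem hu
  have hAζu : B ⁅A, ζ⁆ u = 0 := by
    have h := hinv A hA ζ hζ u hum
    rwa [hperp _ hAu, add_zero] at h
  have hskew : B ⁅u, ζ⁆ u = -B ⁅ζ, u⁆ u := by rw [← lie_skew, map_neg, LinearMap.neg_apply]
  refine ⟨k, ?_, ?_⟩
  · have h := hk u hum (by simpa [add_lie, smul_lie] using h𝔡 hζu)
    simp only [add_lie, smul_lie, lie_self, smul_zero, add_zero, map_add, map_smul,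
      LinearMap.add_apply, LinearMap.smul_apply, smul_eq_mul, hperp' _ hζu, hperp' _ hAu,
      hperp u hu, bilin_lie_self_eq_zero hred hsymm hinv hA hum] at h
    linarith
  · have h := hk ζ hζ (by simpa [add_lie, smul_lie] using Submodule.smul_mem _ t (h𝔡 huζ))
    simp only [add_lie, smul_lie, lie_self, add_zero, zero_add, map_add, map_smul,
      LinearMap.add_apply, LinearMap.smul_apply, smul_eq_mul, hperp' _ huζ, hperp' u hu,
      hskew, hAζu, bilin_lie_self_eq_zero hred hsymm hinv hA hζ] at h
    linarith

theorem bilin_lie_self_eq_zero_of_orthogonal (hred : ∀ A ∈ 𝔥, ∀ X ∈ 𝔪, ⁅A, X⁆ ∈ 𝔪)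
    (hsymm : ∀ X ∈ 𝔪, ∀ Z ∈ 𝔪, B X Z = B Z X)
    (hinv : ∀ A ∈ 𝔥, ∀ X ∈ 𝔪, ∀ Z ∈ 𝔪, B ⁅A, X⁆ Z + B X ⁅A, Z⁆ = 0)
    (hgo : ∀ X ∈ 𝔪, ∃ A ∈ 𝔥, ∃ k : ℝ, ∀ Z ∈ 𝔪, ⁅X, Z⁆ ∈ 𝔪 → B ⁅X + A, Z⁆ X = k * B X Z)
    (h𝔡 : LieSubmodule.toSubmodule 𝔡 ≤ 𝔪) (haniso : ∀ x ∈ 𝔡, B x x = 0 → x = 0)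
    (hζ : ζ ∈ 𝔪) (hperp : ∀ d ∈ 𝔡, B ζ d = 0) (hu : u ∈ 𝔡) :
    B ⁅ζ, u⁆ u = 0 := by
  by_cases hu0 : u = 0
  · simp [hu0]
  have hb : B u u ≠ 0 := fun h => hu0 (haniso u hu h)
  obtain ⟨k₁, e₁, f₁⟩ := exists_geodesic_ratio hred hsymm hinv hgo h𝔡 hζ hperp hu 1
  obtain ⟨k₂, e₂, f₂⟩ := exists_geodesic_ratio hred hsymm hinv hgo h𝔡 hζ hperp hu 2
  -- with `c = B ⁅ζ, u⁆ u`, `e₁` and `e₂` give `k₁ = k₂ = c / B u u`, then `f₁`, `f₂` say `c = 4 c`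
  have h : B ⁅ζ, u⁆ u * B u u = 0 := by
    linear_combination (B ζ ζ / 6) * e₂ - (B u u / 3) * f₂ - (B ζ ζ / 3) * e₁ + (B u u / 3) * f₁
  exact (mul_eq_zero.mp h).resolve_right hb

end GeodesicOrbit

theorem nilradical_two_step_nilpotent_general
    {L : Type*} [LieRing L] [LieAlgebra ℝ L] [FiniteDimensional ℝ L]
    (𝔥 : LieSubalgebra ℝ L) (𝔪 : Submodule ℝ L)
    (hcompl : IsCompl 𝔪 𝔥.toSubmodule)
    (hred : ∀ A ∈ 𝔥, ∀ X ∈ 𝔪, ⁅A, X⁆ ∈ 𝔪)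
    (B : LinearMap.BilinForm ℝ L)
    (hsymm : ∀ X ∈ 𝔪, ∀ Z ∈ 𝔪, B X Z = B Z X)
    (hinv : ∀ A ∈ 𝔥, ∀ X ∈ 𝔪, ∀ Z ∈ 𝔪, B ⁅A, X⁆ Z + B X ⁅A, Z⁆ = 0)
    (𝔫 : LieIdeal ℝ L) (hnil : LieRing.IsNilpotent 𝔫)
    (h𝔫𝔪 : LieSubmodule.toSubmodule 𝔫 ≤ 𝔪)
    (hdef : (∀ x ∈ ⁅𝔫, 𝔫⁆, x ≠ (0 : L) → 0 < B x x) ∨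
            (∀ x ∈ ⁅𝔫, 𝔫⁆, x ≠ (0 : L) → B x x < 0))
    (hgo : ∀ X ∈ 𝔪, ∃ A ∈ 𝔥, ∃ k : ℝ, ∀ Z ∈ 𝔪,
      B ((Submodule.linearProjOfIsCompl 𝔪 𝔥.toSubmodule hcompl ⁅X + A, Z⁆ : 𝔪) : L) X
        = k * B X Z) :
    ⁅𝔫, ⁅𝔫, 𝔫⁆⁆ = (⊥ : LieIdeal ℝ L) := by
  set 𝔡 : LieIdeal ℝ L := ⁅𝔫, 𝔫⁆
  have h𝔡𝔫 : 𝔡 ≤ 𝔫 := LieSubmodule.lie_le_right 𝔫 𝔫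
  have h𝔡𝔪 : LieSubmodule.toSubmodule 𝔡 ≤ 𝔪 := le_trans h𝔡𝔫 h𝔫𝔪
  have haniso : ∀ x ∈ 𝔡, B x x = 0 → x = 0 := fun _ hx =>
    B.eq_zero_of_apply_self_eq_zero_of_definite hdef hx
  have hgo' := exists_lie_apply_eq_of_projection_apply_eq hcompl hred hgo
  have hkill : ∀ ζ ∈ 𝔫, (∀ d ∈ 𝔡, B ζ d = 0) → ∀ u ∈ 𝔡, ⁅ζ, u⁆ = 0 :=
    fun ζ hζ hperp u hu => B.apply_eq_zero_of_isNilpotent haniso (𝔫.isNilpotent_ad_of_mem hζ)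
      (fun _ hv => 𝔡.lie_mem hv)
      (fun _ hv => bilin_lie_self_eq_zero_of_orthogonal hred hsymm hinv hgo' h𝔡𝔪 haniso
        (h𝔫𝔪 hζ) hperp hv) hu
  have hT : ⁅𝔫, 𝔡⁆ ≤ ⁅𝔡, 𝔡⁆ := by
    rw [LieSubmodule.lie_le_iff]
    intro x hx u hu
    obtain ⟨d, hd, hperp⟩ :=
      B.exists_mem_forall_sub_apply_eq_zero (B.nondegenerate_restrict_of_anisotropic haniso) x
    rw [← sub_add_cancel x d, add_lie, hkill _ (sub_mem hx (h𝔡𝔫 hd)) hperp u hu, zero_add]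
    exact LieSubmodule.lie_mem_lie hd hu
  refine LieIdeal.eq_bot_of_le_lie_of_isNilpotent ((LieSubmodule.lie_le_right _ _).trans h𝔡𝔫) ?_
  calc ⁅𝔫, 𝔡⁆ ≤ ⁅𝔡, 𝔡⁆ := hT
    _ ≤ ⁅𝔫, ⁅𝔫, 𝔡⁆⁆ ⊔ ⁅𝔫, ⁅𝔫, 𝔡⁆⁆ := LieSubmodule.lie_lie_le
    _ = ⁅𝔫, ⁅𝔫, 𝔡⁆⁆ := sup_idem _

/-- Let `𝔤 = 𝔪 + 𝔥` be a reductive decomposition for a geodesic orbit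
pseudo-Riemannian homogeneous space (so the scalar product `B` on `𝔪` is symmetric,
nondegenerate and `ad(𝔥)`-invariant), let `𝔫 ⊆ 𝔪` be the nilradical of `𝔤`, and
suppose the restriction of `B` to `[𝔫,𝔫]` is positive or negative definite.  If for
each `X ∈ 𝔪` there exist `A ∈ 𝔥` and `k ∈ ℝ` with
`⟨[X+A, Z]_𝔪, X⟩ = k ⟨X,Z⟩` for all `Z ∈ 𝔪` (the geodesic orbit condition), then
`𝔫` is at most 2-step nilpotent: `[𝔫, [𝔫,𝔫]] = 0`. -/
theorem nilradical_two_step_nilpotent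
    {L : Type*} [LieRing L] [LieAlgebra ℝ L] [FiniteDimensional ℝ L]
    (𝔥 : LieSubalgebra ℝ L) (𝔪 : Submodule ℝ L)
    (hcompl : IsCompl 𝔪 𝔥.toSubmodule)
    (hred : ∀ A ∈ 𝔥, ∀ X ∈ 𝔪, ⁅A, X⁆ ∈ 𝔪)
    (B : LinearMap.BilinForm ℝ L)
    (hsymm : ∀ X ∈ 𝔪, ∀ Z ∈ 𝔪, B X Z = B Z X)
    (hnondeg : ∀ X ∈ 𝔪, (∀ Z ∈ 𝔪, B X Z = 0) → X = 0)
    (hinv : ∀ A ∈ 𝔥, ∀ X ∈ 𝔪, ∀ Z ∈ 𝔪, B ⁅A, X⁆ Z + B X ⁅A, Z⁆ = 0)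
    (𝔫 : LieIdeal ℝ L) (hnil : LieRing.IsNilpotent 𝔫)
    (hmax : ∀ J : LieIdeal ℝ L, LieRing.IsNilpotent J → J ≤ 𝔫)
    (h𝔫𝔪 : LieSubmodule.toSubmodule 𝔫 ≤ 𝔪)
    (hdef : (∀ x ∈ ⁅𝔫, 𝔫⁆, x ≠ (0 : L) → 0 < B x x) ∨
            (∀ x ∈ ⁅𝔫, 𝔫⁆, x ≠ (0 : L) → B x x < 0))
    (hgo : ∀ X ∈ 𝔪, ∃ A ∈ 𝔥, ∃ k : ℝ, ∀ Z ∈ 𝔪,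
      B ((Submodule.linearProjOfIsCompl 𝔪 𝔥.toSubmodule hcompl ⁅X + A, Z⁆ : 𝔪) : L) X
        = k * B X Z) :
    ⁅𝔫, ⁅𝔫, 𝔫⁆⁆ = (⊥ : LieIdeal ℝ L) :=
  nilradical_two_step_nilpotent_general 𝔥 𝔪 hcompl hred B hsymm hinv 𝔫 hnil h𝔫𝔪 hdef hgo
end
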